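/- Let M be a loopless matroid on a finite ground set E, B a building set for M, and Z ∈ B ∖ max(B). Then the set B|_Z ∪ B^Z = {Y ∈ B : Y ⊆ Z} ∪ {(Y ∨ Z) ∖ Z : Y ∈ B, Y ⊄ Z} is a building set for the matroid M′, the direct sum of the restriction M|Z and the contraction M/Z. -/

import Mathlib

open Set Matroid
open scoped Matroid

variable {α : Type*}

/-- Two sets are incomparable under inclusion. -/
def Incomp (X Y : Set α) : Prop := ¬ X ⊆ Y ∧ ¬ Y ⊆ X

/-- The inclusion-maximal elements of a family of sets. -/
def maxB (B : Set (Set α)) : Set (Set α) := {X ∈ B | ∀ Y ∈ B, X ⊆ Y → X = Y}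

/-- The rank of a set in a matroid: the largest size of an independent subset. -/
noncomputable def mrank (M : Matroid α) (X : Set α) : ℕ :=
  sSup {n : ℕ | ∃ I ⊆ X, M.Indep I ∧ I.ncard = n}

/-- A matroid is loopless if every singleton of the ground set is independent. -/
def MLoopless (M : Matroid α) : Prop := ∀ e ∈ M.E, M.Indep {e}

/-- A matroid is connected if its rank function is not additive over any
separation of the ground set into two nonempty parts. -/
def MConnected (M : Matroid α) : Prop :=
  ∀ A B : Set α, A ∪ B = M.E → Disjoint A B → A.Nonempty → B.Nonempty →
    mrank M A + mrank M B ≠ mrank M M.E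

/-- A building set for a matroid `M`: a set of nonempty flats containing all nonempty
flats whose restriction is connected, and closed under joins of intersecting members. -/
def IsBuildingSet (M : Matroid α) (B : Set (Set α)) : Prop :=
  (∀ X ∈ B, M.IsFlat X ∧ X.Nonempty) ∧
  (∀ X, M.IsFlat X → X.Nonempty → MConnected (M.restrict X) → X ∈ B) ∧
  (∀ X ∈ B, ∀ Y ∈ B, (X ∩ Y).Nonempty → M.closure (X ∪ Y) ∈ B)

/-- A nested set of a building set `B`. -/
def IsNested (M : Matroid α) (B N : Set (Set α)) : Prop :=
  N ⊆ B ∧ maxB B ⊆ N ∧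
  ∀ S : Set (Set α), S ⊆ N → S.Nontrivial → S.Pairwise Incomp →
    M.closure (⋃₀ S) ∉ B

/-- An inclusion-maximal nested set. -/
def IsMaxNested (M : Matroid α) (B N : Set (Set α)) : Prop :=
  IsNested M B N ∧ ∀ N', IsNested M B N' → N ⊆ N' → N' = N

/-- An atom of a matroid: a rank-one flat. -/
def IsAtomFlat (M : Matroid α) (A : Set α) : Prop := M.IsFlat A ∧ mrank M A = 1

/-- Atoms are compared by their least elements. -/
def atomLE [Preorder α] (A A' : Set α) : Prop :=
  ∃ a a', IsLeast A a ∧ IsLeast A' a' ∧ a ≤ a'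

/-- Strict comparison of atoms by their least elements. -/
def atomLT [Preorder α] (A A' : Set α) : Prop :=
  ∃ a a', IsLeast A a ∧ IsLeast A' a' ∧ a < a'

/-- `A` is an admissible label for `X` within the family `S`:
an atom contained in `X` but in no member of `S` properly below `X`. -/
def GoodLabel (M : Matroid α) (S : Set (Set α)) (X A : Set α) : Prop :=
  IsAtomFlat M A ∧ A ⊆ X ∧ ∀ Y ∈ S, Y ⊂ X → ¬ A ⊆ Y

/-- `A` is the label `m_S(X)`: the least admissible label for `X` within `S`. -/
def IsMinLabel [Preorder α] (M : Matroid α) (S : Set (Set α)) (X A : Set α) : Prop :=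
  GoodLabel M S X A ∧ ∀ A', GoodLabel M S X A' → atomLE A A'

/-- `NLListing M N R L` : `L` is the NL-listing of the remaining family `R`
(labels computed with respect to the whole family `N`), obtained by repeatedly
plucking the inclusion-minimal member with least label. -/
inductive NLListing [Preorder α] (M : Matroid α) (N : Set (Set α)) :
    Set (Set α) → List (Set α × Set α) → Prop
  | nil : NLListing M N ∅ []
  | cons {R : Set (Set α)} {X A : Set α} {L : List (Set α × Set α)} :
      X ∈ R →
      (∀ Y ∈ R, Y ⊆ X → Y = X) →
      IsMinLabel M N X A →
      (∀ Y ∈ R, (∀ W ∈ R, W ⊆ Y → W = Y) → ∀ A', IsMinLabel M N Y A' → atomLE A A') →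
      NLListing M N (R \ {X}) L →
      NLListing M N R ((X, A) :: L)

/-- A descent of a list of atoms at position `i`. -/
def HasDescentAt [Preorder α] (L : List (Set α)) (i : ℕ) : Prop :=
  ∃ h : i + 1 < L.length, atomLT (L.get ⟨i + 1, h⟩) (L.get ⟨i, Nat.lt_of_succ_lt h⟩)

/-- The indicator vector of a set. -/
noncomputable def indVec (X : Set α) : α → ℝ := X.indicator 1

/-- `v` is the vertex of the nested set `N` for the weight vector `c`. -/
def IsVertex (M : Matroid α) (B : Set (Set α)) (c : Set α → ℝ) (N : Set (Set α))
    (v : α → ℝ) : Prop :=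
  (∀ X ∈ N, ∑ᶠ a ∈ X, v a = c X) ∧
  ∃ lam mu : Set α → ℝ,
    (∀ X ∈ N \ maxB B, 0 < lam X) ∧
    v = (∑ᶠ X ∈ N \ maxB B, lam X • indVec X) + ∑ᶠ Y ∈ maxB B, mu Y • indVec Y

/-- `c` is cubical: every nested set has a unique vertex. -/
def IsCubical (M : Matroid α) (B : Set (Set α)) (c : Set α → ℝ) : Prop :=
  ∀ N, IsNested M B N → ∃! v, IsVertex M B c N v

/-- Lexicographic comparison of vectors in `ℝ^E`. -/
def lexLt [LinearOrder α] (u v : α → ℝ) : Prop :=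
  ∃ i, u i < v i ∧ ∀ j, j < i → u j = v j

open Classical in
/-- The map `τ_Z`. -/
noncomputable def tau (M : Matroid α) (Z X : Set α) : Set α :=
  if X ⊆ Z then X else M.closure (X ∪ Z) \ Z

/-- `MZ` is the contraction `M ／ Z`. -/
def IsContraction (M MZ : Matroid α) (Z : Set α) : Prop :=
  MZ.E = M.E \ Z ∧
  ∀ I : Set α, MZ.Indep I ↔ I ⊆ M.E \ Z ∧ ∃ J, M.IsBasis J Z ∧ M.Indep (I ∪ J)

set_option linter.unusedSectionVars false

section AuxLemmas

section RankBasics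

variable [Fintype α] {M : Matroid α} {X Y A I J : Set α} {e : α}

lemma mrank_set_nonempty (M : Matroid α) (X : Set α) :
    {n : ℕ | ∃ I ⊆ X, M.Indep I ∧ I.ncard = n}.Nonempty :=
  ⟨0, ∅, empty_subset _, M.empty_indep, by simp⟩

lemma mrank_set_bdd (M : Matroid α) (X : Set α) :
    BddAbove {n : ℕ | ∃ I ⊆ X, M.Indep I ∧ I.ncard = n} := by
  refine ⟨Fintype.card α, fun n hn => ?_⟩
  obtain ⟨I, -, -, rfl⟩ := hn
  have := Set.ncard_le_ncard (subset_univ I) (Set.toFinite _)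
  simpa [Set.ncard_univ] using this

lemma ncard_le_mrank (hI : M.Indep I) (hIX : I ⊆ X) : I.ncard ≤ mrank M X :=
  le_csSup (mrank_set_bdd M X) ⟨I, hIX, hI, rfl⟩

lemma exists_mrank (M : Matroid α) (X : Set α) :
    ∃ I ⊆ X, M.Indep I ∧ I.ncard = mrank M X :=
  Nat.sSup_mem (mrank_set_nonempty M X) (mrank_set_bdd M X)

lemma mrank_mono (M : Matroid α) (h : X ⊆ Y) : mrank M X ≤ mrank M Y := by
  obtain ⟨I, hIX, hI, hcard⟩ := exists_mrank M X
  exact hcard ▸ ncard_le_mrank hI (hIX.trans h)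

lemma mrank_indep (hI : M.Indep I) : mrank M I = I.ncard := by
  refine le_antisymm ?_ (ncard_le_mrank hI Subset.rfl)
  obtain ⟨J, hJI, -, hcard⟩ := exists_mrank M I
  exact hcard ▸ Set.ncard_le_ncard hJI (Set.toFinite _)

@[simp] lemma mrank_empty (M : Matroid α) : mrank M (∅ : Set α) = 0 := by
  simpa using mrank_indep (M := M) M.empty_indep

lemma mrank_inter_ground (M : Matroid α) (X : Set α) : mrank M (X ∩ M.E) = mrank M X := by
  refine le_antisymm (mrank_mono M inter_subset_left) ?_
  obtain ⟨I, hIX, hI, hcard⟩ := exists_mrank M X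
  exact hcard ▸ ncard_le_mrank hI (subset_inter hIX hI.subset_ground)

lemma mrank_basis (hI : M.IsBasis I X) : I.ncard = mrank M X := by
  obtain ⟨J, hJX, hJ, hcard⟩ := exists_mrank M X
  obtain ⟨J', hJ', hJJ'⟩ := hJ.subset_isBasis_of_subset (subset_inter hJX hJ.subset_ground)
    inter_subset_right
  have h1 : M.IsBasis I (X ∩ M.E) := hI.isBasis_inter_ground
  have hIJ' : I.ncard = J'.ncard := by
    rw [Set.ncard_def, Set.ncard_def, h1.encard_eq_encard hJ']
  have h2 : J.ncard ≤ J'.ncard := Set.ncard_le_ncard hJJ' (Set.toFinite _)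
  have h3 : J'.ncard ≤ mrank M X := ncard_le_mrank hJ'.indep (hJ'.subset.trans inter_subset_left)
  omega


lemma mrank_closure (M : Matroid α) (X : Set α) : mrank M (M.closure X) = mrank M X := by
  obtain ⟨J, hJ⟩ := M.exists_isBasis (X ∩ M.E) inter_subset_right
  have hJc : M.IsBasis J (M.closure X) := by
    rw [← closure_inter_ground]; exact hJ.isBasis_closure_right
  refine le_antisymm ?_ ?_
  · rw [← mrank_basis hJc]
    exact ncard_le_mrank hJ.indep (hJ.subset.trans inter_subset_left)
  · rw [← mrank_inter_ground M X]
    exact mrank_mono M (M.subset_closure _ inter_subset_right |>.trans (by rw [closure_inter_ground]))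

lemma mrank_le_of_subset_closure (hXY : X ⊆ M.closure Y) : mrank M X ≤ mrank M Y := by
  rw [← mrank_closure M Y]; exact mrank_mono M hXY

lemma mrank_union_le (M : Matroid α) (A B : Set α) :
    mrank M (A ∪ B) ≤ mrank M A + mrank M B := by
  obtain ⟨I, hIX, hI, hcard⟩ := exists_mrank M (A ∪ B)
  have h1 : I = (I ∩ A) ∪ (I \ A) := by simp [inter_union_diff]
  have h2 : I.ncard ≤ (I ∩ A).ncard + (I \ A).ncard := by
    nth_rewrite 1 [h1]; exact Set.ncard_union_le _ _
  have h3 : (I ∩ A).ncard ≤ mrank M A :=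
    ncard_le_mrank (hI.subset inter_subset_left) inter_subset_right
  have h4 : (I \ A).ncard ≤ mrank M B := by
    refine ncard_le_mrank (hI.subset diff_subset) (fun x hx => ?_)
    rcases hIX hx.1 with h | h
    · exact absurd h hx.2
    · exact h
  omega

lemma mrank_singleton_le (M : Matroid α) (e : α) : mrank M {e} ≤ 1 := by
  obtain ⟨I, hIX, hI, hcard⟩ := exists_mrank M {e}
  rw [← hcard]
  simpa using Set.ncard_le_ncard hIX (Set.toFinite _)

lemma mrank_insert_le (M : Matroid α) (e : α) (X : Set α) :
    mrank M (insert e X) ≤ mrank M X + 1 := by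
  have := mrank_union_le M X {e}
  have h2 := mrank_singleton_le M e
  rw [union_singleton] at this
  omega

lemma mem_closure_iff_mrank (hX : X ⊆ M.E) (he : e ∈ M.E) :
    e ∈ M.closure X ↔ mrank M (insert e X) = mrank M X := by
  constructor
  · intro hecl
    refine le_antisymm ?_ (mrank_mono M (subset_insert _ _))
    exact mrank_le_of_subset_closure (insert_subset hecl (M.subset_closure X hX))
  · intro hr
    by_contra hecl
    obtain ⟨J, hJ⟩ := M.exists_isBasis X hX
    have heJ : e ∉ M.closure J := by rw [hJ.closure_eq_closure]; exact hecl
    have heJ' : e ∉ J := fun h => heJ (M.subset_closure J hJ.indep.subset_ground h)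
    have hind : M.Indep (insert e J) := by
      rw [Matroid.insert_indep_iff]
      exact ⟨hJ.indep, fun _ => ⟨he, heJ⟩⟩
    have hle : (insert e J).ncard ≤ mrank M (insert e X) :=
      ncard_le_mrank hind (insert_subset_insert hJ.subset)
    rw [Set.ncard_insert_of_notMem heJ' (Set.toFinite _)] at hle
    have := mrank_basis hJ
    omega

lemma flat_closure (M : Matroid α) (X : Set α) : M.IsFlat (M.closure X) := by
  rw [closure_def]
  have hne : Nonempty {F // M.IsFlat F ∧ X ∩ M.E ⊆ F} :=
    ⟨⟨M.E, M.ground_isFlat, inter_subset_right⟩⟩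
  have : ⋂₀ {F | M.IsFlat F ∧ X ∩ M.E ⊆ F}
      = ⋂ F : {F // M.IsFlat F ∧ X ∩ M.E ⊆ F}, F.1 := by
    ext x; simp [Set.mem_sInter]
  rw [this]
  exact IsFlat.iInter fun F => F.2.1

lemma flat_iff_closure_eq {F : Set α} : M.IsFlat F ↔ M.closure F = F :=
  ⟨IsFlat.closure, fun h => h ▸ flat_closure M F⟩

lemma mloopless_closure_empty (hM : MLoopless M) : M.closure ∅ = (∅ : Set α) := by
  by_contra h
  obtain ⟨e, he⟩ := nonempty_iff_ne_empty.2 h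
  have heE : e ∈ M.E := M.closure_subset_ground ∅ he
  have := (mem_closure_iff_mrank (empty_subset _) heE).1 he
  have h1 : mrank M {e} = 1 := by
    rw [mrank_indep (hM e heE)]; simp
  simp only [insert_empty_eq] at this
  rw [h1, mrank_empty] at this
  omega

lemma mrank_singleton_loopless (hM : MLoopless M) (he : e ∈ M.E) : mrank M {e} = 1 := by
  rw [mrank_indep (hM e he)]; simp

lemma mrank_restrict (hAX : A ⊆ X) : mrank (M ↾ X) A = mrank M A := by
  unfold mrank
  congr 1
  ext n
  constructor
  · rintro ⟨I, hIA, hI, rfl⟩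
    exact ⟨I, hIA, (restrict_indep_iff.1 hI).1, rfl⟩
  · rintro ⟨I, hIA, hI, rfl⟩
    exact ⟨I, hIA, restrict_indep_iff.2 ⟨hI, hIA.trans hAX⟩, rfl⟩

lemma indep_of_mrank_eq_ncard (hIX : mrank M X = X.ncard) : M.Indep X := by
  obtain ⟨I, hIX', hI, hcard⟩ := exists_mrank M X
  have : I = X := Set.eq_of_subset_of_ncard_le hIX' (by omega) (Set.toFinite _)
  exact this ▸ hI

end RankBasics

section Separations

variable [Fintype α] {M : Matroid α} {F A B S X Y I J : Set α} {e : α}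

/-- `A` induces an additive separation of `F`. -/
def SepM (M : Matroid α) (F A : Set α) : Prop :=
  A ⊆ F ∧ mrank M A + mrank M (F \ A) = mrank M F

lemma mrank_le_ncard (M : Matroid α) (X : Set α) : mrank M X ≤ X.ncard := by
  obtain ⟨I, hIX, hI, hcard⟩ := exists_mrank M X
  exact hcard ▸ Set.ncard_le_ncard hIX (Set.toFinite _)

lemma mrank_le_sep (hA : A ⊆ F) : mrank M F ≤ mrank M A + mrank M (F \ A) := by
  have := mrank_union_le M A (F \ A)
  rwa [union_diff_cancel hA] at this

lemma sep_ground (M : Matroid α) (F : Set α) : SepM M F F :=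
  ⟨Subset.rfl, by simp⟩

lemma SepM.diff (h : SepM M F A) : SepM M F (F \ A) := by
  have h2 := h.2
  refine ⟨diff_subset, ?_⟩
  rw [diff_diff_cancel_left h.1]
  omega

lemma SepM.subset_rank (hF : F ⊆ M.E) (h : SepM M F A) (hS : S ⊆ F) :
    mrank M S = mrank M (S ∩ A) + mrank M (S \ A) := by
  obtain ⟨hAF, hsum⟩ := h
  refine le_antisymm ?_ ?_
  · have := mrank_union_le M (S ∩ A) (S \ A)
    rwa [inter_union_diff] at this
  · obtain ⟨I, hIS, hI, hIcard⟩ := exists_mrank M (S ∩ A)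
    obtain ⟨J, hJS, hJ, hJcard⟩ := exists_mrank M (S \ A)
    obtain ⟨I', hI', hII'⟩ := hI.subset_isBasis_of_subset (hIS.trans (inter_subset_right))
      (hAF.trans hF)
    obtain ⟨J', hJ', hJJ'⟩ := hJ.subset_isBasis_of_subset
      (hJS.trans (diff_subset_diff_left hS)) ((diff_subset).trans hF)
    have hdisj : Disjoint I' J' :=
      Set.disjoint_of_subset hI'.subset hJ'.subset disjoint_sdiff_right
    have hKcard : (I' ∪ J').ncard = I'.ncard + J'.ncard :=
      Set.ncard_union_eq hdisj (Set.toFinite _) (Set.toFinite _)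
    have hFcl : F ⊆ M.closure (I' ∪ J') := by
      intro x hx
      by_cases hxA : x ∈ A
      · exact M.closure_subset_closure subset_union_left (hI'.subset_closure hxA)
      · exact M.closure_subset_closure subset_union_right (hJ'.subset_closure ⟨hx, hxA⟩)
    have h1 : mrank M F ≤ mrank M (I' ∪ J') := mrank_le_of_subset_closure hFcl
    have h2 : mrank M (I' ∪ J') ≤ (I' ∪ J').ncard := mrank_le_ncard M _
    have h3 : I'.ncard = mrank M A := mrank_basis hI'
    have h4 : J'.ncard = mrank M (F \ A) := mrank_basis hJ'
    have hK : M.Indep (I' ∪ J') := by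
      apply indep_of_mrank_eq_ncard
      omega
    have hIJ : M.Indep (I ∪ J) := hK.subset (union_subset_union hII' hJJ')
    have hIJcard : (I ∪ J).ncard = I.ncard + J.ncard := by
      refine Set.ncard_union_eq ?_ (Set.toFinite _) (Set.toFinite _)
      exact Set.disjoint_of_subset (hIS.trans inter_subset_right)
        (hJS.trans (diff_subset_diff_left hS)) disjoint_sdiff_right
    have := ncard_le_mrank hIJ (union_subset (hIS.trans inter_subset_left)
      (hJS.trans diff_subset))
    omega

lemma SepM.inter (hF : F ⊆ M.E) (hA : SepM M F A) (hB : SepM M F B) : SepM M F (A ∩ B) := by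
  have hAF := hA.1
  have e1 : (F \ (A ∩ B)) ∩ A = A \ B := by
    ext x
    simp only [mem_inter_iff, mem_diff, mem_inter_iff, not_and]
    constructor
    · rintro ⟨⟨-, hx2⟩, hx3⟩
      exact ⟨hx3, fun hB' => hx2 hx3 hB'⟩
    · rintro ⟨hx1, hx2⟩
      exact ⟨⟨hAF hx1, fun _ h => hx2 h⟩, hx1⟩
  have e2 : (F \ (A ∩ B)) \ A = F \ A := by
    ext x
    simp only [mem_diff, mem_inter_iff, not_and]
    tauto
  have h1 : mrank M A = mrank M (A ∩ B) + mrank M (A \ B) := hB.subset_rank hF hA.1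
  have h2 := hA.subset_rank hF (diff_subset : F \ (A ∩ B) ⊆ F)
  rw [e1, e2] at h2
  have h3 := hA.2
  exact ⟨inter_subset_left.trans hA.1, by omega⟩

lemma SepM.closure_mem (hF : F ⊆ M.E) (h : SepM M F A) (hS : S ⊆ F)
    (he : e ∈ M.closure S) (heF : e ∈ F \ A) : e ∈ M.closure (S \ A) := by
  have heE : e ∈ M.E := M.closure_subset_ground S he
  have hSE : S ⊆ M.E := hS.trans hF
  have hr : mrank M (insert e S) = mrank M S := (mem_closure_iff_mrank hSE heE).1 he
  have hins : insert e S ⊆ F := insert_subset heF.1 hS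
  have h1 := h.subset_rank hF hins
  have h2 := h.subset_rank hF hS
  have e1 : insert e S ∩ A = S ∩ A := by
    ext x; constructor
    · rintro ⟨hx1, hx2⟩
      rcases hx1 with rfl | hx1
      · exact absurd hx2 heF.2
      · exact ⟨hx1, hx2⟩
    · rintro ⟨hx1, hx2⟩; exact ⟨Or.inr hx1, hx2⟩
  have e2 : insert e S \ A = insert e (S \ A) := by
    ext x; constructor
    · rintro ⟨hx1, hx2⟩
      rcases hx1 with rfl | hx1
      · exact Or.inl rfl
      · exact Or.inr ⟨hx1, hx2⟩
    · rintro (rfl | ⟨hx1, hx2⟩)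
      · exact ⟨Or.inl rfl, heF.2⟩
      · exact ⟨Or.inr hx1, hx2⟩
  rw [e1, e2] at h1
  have hr2 : mrank M (insert e (S \ A)) = mrank M (S \ A) := by
    have hle := mrank_mono M (subset_insert e (S \ A))
    omega
  exact (mem_closure_iff_mrank (diff_subset.trans hSE) heE).2 hr2

end Separations

section Components

variable [Fintype α] {M : Matroid α} {F A T S : Set α} {a b e x : α}

def compM (M : Matroid α) (F : Set α) (a : α) : Set α :=
  F ∩ ⋂₀ {A | SepM M F A ∧ a ∈ A}

lemma sepM_sInter (hF : F ⊆ M.E) {𝒜 : Set (Set α)} (h𝒜 : ∀ A ∈ 𝒜, SepM M F A) :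
    SepM M F (F ∩ ⋂₀ 𝒜) := by
  have hfin : 𝒜.Finite := Set.toFinite _
  refine Set.Finite.induction_on
    (motive := fun 𝒜 _ => (∀ A ∈ 𝒜, SepM M F A) → SepM M F (F ∩ ⋂₀ 𝒜)) 𝒜 hfin
    (fun _ => by simpa using sep_ground M F) ?_ h𝒜
  intro A 𝒜' hA hfin' ih h𝒜'
  have e1 : F ∩ ⋂₀ insert A 𝒜' = A ∩ (F ∩ ⋂₀ 𝒜') := by
    simp only [sInter_insert]
    ext x; simp; tauto
  rw [e1]
  exact SepM.inter hF (h𝒜' A (mem_insert _ _)) (ih fun B hB => h𝒜' B (Or.inr hB))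

lemma mem_compM_self (ha : a ∈ F) : a ∈ compM M F a :=
  ⟨ha, fun A hA => hA.2⟩

lemma compM_subset_base (M : Matroid α) (F : Set α) (a : α) : compM M F a ⊆ F :=
  inter_subset_left

lemma compM_subset_sep (hA : SepM M F A) (haA : a ∈ A) : compM M F a ⊆ A :=
  fun _ hx => hx.2 A ⟨hA, haA⟩

lemma sepM_compM (hF : F ⊆ M.E) (a : α) : SepM M F (compM M F a) :=
  sepM_sInter hF (fun A hA => hA.1)

lemma mem_compM_comm (hF : F ⊆ M.E) (ha : a ∈ F) (hb : b ∈ compM M F a) :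
    a ∈ compM M F b := by
  refine ⟨ha, ?_⟩
  rintro A ⟨hA, hbA⟩
  by_contra haA
  have h1 : compM M F a ⊆ F \ A := compM_subset_sep hA.diff ⟨ha, haA⟩
  exact (h1 hb).2 hbA

lemma compM_eq_of_mem (hF : F ⊆ M.E) (ha : a ∈ F) (hb : b ∈ compM M F a) :
    compM M F b = compM M F a := by
  have hbF : b ∈ F := (compM_subset_base M F a) hb
  have hab : a ∈ compM M F b := mem_compM_comm hF ha hb
  exact le_antisymm (compM_subset_sep (sepM_compM hF a) hb)
    (compM_subset_sep (sepM_compM hF b) hab)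

lemma sepM_of_comp_closed (hF : F ⊆ M.E) (hT : T ⊆ F)
    (hcl : ∀ a ∈ T, compM M F a ⊆ T) : SepM M F T := by
  have e1 : F \ T = F ∩ ⋂₀ {B | ∃ a ∈ T, B = F \ compM M F a} := by
    ext x
    simp only [mem_diff, mem_inter_iff, mem_sInter, mem_setOf_eq]
    constructor
    · rintro ⟨hxF, hxT⟩
      refine ⟨hxF, ?_⟩
      rintro B ⟨a, haT, rfl⟩
      exact ⟨hxF, fun hxc => hxT (hcl a haT hxc)⟩
    · rintro ⟨hxF, hx⟩
      refine ⟨hxF, fun hxT => ?_⟩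
      obtain ⟨-, h2⟩ := hx (F \ compM M F x) ⟨x, hxT, rfl⟩
      exact h2 (mem_compM_self hxF)
  have h2 : SepM M F (F \ T) := by
    rw [e1]
    refine sepM_sInter hF ?_
    rintro B ⟨a, haT, rfl⟩
    exact (sepM_compM hF a).diff
  have := h2.diff
  rwa [diff_diff_cancel_left hT] at this

lemma compM_flat (hM : MLoopless M) (hF : M.IsFlat F) (ha : a ∈ F) :
    M.IsFlat (compM M F a) := by
  rw [flat_iff_closure_eq]
  have hFE := hF.subset_ground
  have hCF : compM M F a ⊆ F := compM_subset_base M F a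
  refine le_antisymm ?_ (M.subset_closure _ (hCF.trans hFE))
  intro e he
  have heF : e ∈ F := by
    have : M.closure (compM M F a) ⊆ M.closure F := M.closure_subset_closure hCF
    rw [hF.closure] at this
    exact this he
  by_contra heC
  have := (sepM_compM hFE a).closure_mem hFE hCF he ⟨heF, heC⟩
  rw [diff_self] at this
  rw [mloopless_closure_empty hM] at this
  exact this

lemma compM_connected (hF : F ⊆ M.E) (ha : a ∈ F) :
    MConnected (M.restrict (compM M F a)) := by
  unfold MConnected
  intro P Q hPQ hdisj hPne hQne heq
  set C := compM M F a with hC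
  have hCE : (M ↾ C).E = C := rfl
  rw [hCE] at hPQ
  have hPC : P ⊆ C := hPQ ▸ subset_union_left
  have hQC : Q ⊆ C := hPQ ▸ subset_union_right
  rw [hCE, mrank_restrict hPC, mrank_restrict hQC, mrank_restrict Subset.rfl] at heq
  have hCF : C ⊆ F := compM_subset_base M F a
  have hPF : P ⊆ F := hPC.trans hCF
  -- P is a separation of F
  have hFP : F \ P ⊆ Q ∪ (F \ C) := by
    intro x hx
    by_cases hxC : x ∈ C
    · have : x ∈ P ∪ Q := hPQ ▸ hxC
      rcases this with h | h
      · exact absurd h hx.2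
      · exact Or.inl h
    · exact Or.inr ⟨hx.1, hxC⟩
  have h1 : mrank M (F \ P) ≤ mrank M Q + mrank M (F \ C) :=
    le_trans (mrank_mono M hFP) (mrank_union_le M Q (F \ C))
  have h2 : mrank M F ≤ mrank M P + mrank M (F \ P) := mrank_le_sep hPF
  have h3 := (sepM_compM hF a).2
  rw [← hC] at h3
  have h4 : mrank M C = mrank M P + mrank M Q := by rw [← hPQ] at heq ⊢; exact heq.symm
  have hsepP : SepM M F P := ⟨hPF, by omega⟩
  have haC : a ∈ C := mem_compM_self ha
  have : a ∈ P ∪ Q := hPQ ▸ haC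
  rcases this with haP | haQ
  · obtain ⟨q, hq⟩ := hQne
    have : C ⊆ P := compM_subset_sep hsepP haP
    exact hdisj.ne_of_mem (this (hQC hq)) hq rfl
  · have haFP : a ∈ F \ P := ⟨ha, fun haP => hdisj.ne_of_mem haP haQ rfl⟩
    have : C ⊆ F \ P := compM_subset_sep hsepP.diff haFP
    obtain ⟨p, hp⟩ := hPne
    exact (this (hPC hp)).2 hp

end Components

section Contraction

variable [Fintype α] {M MZ : Matroid α} {Z S X Y F : Set α} {e x : α}

lemma contract_mrank (hMZ : IsContraction M MZ Z) (hZE : Z ⊆ M.E) (hS : S ⊆ M.E \ Z) :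
    mrank MZ S + mrank M Z = mrank M (S ∪ Z) := by
  obtain ⟨hE, hind⟩ := hMZ
  have hSE : S ⊆ M.E := hS.trans diff_subset
  have hSZ : Disjoint S Z := disjoint_sdiff_left.mono_left hS
  -- ≤
  have hle : mrank MZ S + mrank M Z ≤ mrank M (S ∪ Z) := by
    obtain ⟨I, hIS, hI, hIcard⟩ := exists_mrank MZ S
    obtain ⟨hIE, J, hJ, hIJ⟩ := (hind I).1 hI
    have hdisj : Disjoint I J := (disjoint_sdiff_left.mono_left hIE).mono_right hJ.subset
    have h1 : (I ∪ J).ncard = I.ncard + J.ncard :=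
      Set.ncard_union_eq hdisj (Set.toFinite _) (Set.toFinite _)
    have h2 : (I ∪ J).ncard ≤ mrank M (S ∪ Z) :=
      ncard_le_mrank hIJ (union_subset_union hIS hJ.subset)
    have h3 := mrank_basis hJ
    omega
  -- ≥
  obtain ⟨J, hJ⟩ := M.exists_isBasis Z hZE
  obtain ⟨K, hK, hJK⟩ := hJ.indep.subset_isBasis_of_subset
    (hJ.subset.trans subset_union_right) (union_subset hSE hZE)
  have hKZ : J = K ∩ Z := hJ.eq_of_subset_indep (hK.indep.subset inter_subset_left)
    (subset_inter hJK hJ.subset) inter_subset_right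
  have hIindep : MZ.Indep (K \ Z) := by
    rw [hind]
    refine ⟨diff_subset_diff hK.indep.subset_ground Subset.rfl, J, hJ, ?_⟩
    have : K \ Z ∪ J = K := by rw [hKZ, Set.diff_union_inter]
    rw [this]
    exact hK.indep
  have hIS' : K \ Z ⊆ S := by
    intro y hy
    rcases hK.subset hy.1 with h | h
    · exact h
    · exact absurd h hy.2
  have h4 : (K \ Z).ncard ≤ mrank MZ S := ncard_le_mrank hIindep hIS'
  have h5 : (K ∩ Z).ncard + (K \ Z).ncard = K.ncard :=
    Set.ncard_inter_add_ncard_diff_eq_ncard K Z (Set.toFinite _)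
  have h6 := mrank_basis hK
  have h7 := mrank_basis hJ
  rw [← hKZ] at h5
  omega

lemma contract_loopless (hMZ : IsContraction M MZ Z) (hZflat : M.IsFlat Z)
    (hM : MLoopless M) : MLoopless MZ := by
  intro e he
  rw [hMZ.1] at he
  rw [hMZ.2]
  obtain ⟨J, hJ⟩ := M.exists_isBasis Z hZflat.subset_ground
  refine ⟨singleton_subset_iff.2 he, J, hJ, ?_⟩
  rw [singleton_union, Matroid.insert_indep_iff]
  refine ⟨hJ.indep, fun _ => ⟨he.1, fun hecl => ?_⟩⟩
  rw [hJ.closure_eq_closure, hZflat.closure] at hecl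
  exact he.2 hecl

lemma contract_closure (hMZ : IsContraction M MZ Z) (hZE : Z ⊆ M.E)
    (hS : S ⊆ M.E \ Z) : MZ.closure S = M.closure (S ∪ Z) \ Z := by
  have hSE : S ⊆ M.E := hS.trans diff_subset
  have hSMZ : S ⊆ MZ.E := by rw [hMZ.1]; exact hS
  ext e
  constructor
  · intro he
    have heE : e ∈ MZ.E := MZ.closure_subset_ground S he
    have heE' : e ∈ M.E \ Z := hMZ.1 ▸ heE
    have hr := (mem_closure_iff_mrank hSMZ heE).1 he
    have hiS : insert e S ⊆ M.E \ Z := insert_subset heE' hS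
    have c1 := contract_mrank hMZ hZE hiS
    have c2 := contract_mrank hMZ hZE hS
    have : insert e S ∪ Z = insert e (S ∪ Z) := by ext y; simp; tauto
    rw [this] at c1
    refine ⟨(mem_closure_iff_mrank (union_subset hSE hZE) heE'.1).2 (by omega), heE'.2⟩
  · rintro ⟨he, heZ⟩
    have heE : e ∈ M.E := M.closure_subset_ground _ he
    have heMZ : e ∈ MZ.E := by rw [hMZ.1]; exact ⟨heE, heZ⟩
    have hr := (mem_closure_iff_mrank (union_subset hSE hZE) heE).1 he
    have hiS : insert e S ⊆ M.E \ Z := insert_subset ⟨heE, heZ⟩ hS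
    have c1 := contract_mrank hMZ hZE hiS
    have c2 := contract_mrank hMZ hZE hS
    have : insert e S ∪ Z = insert e (S ∪ Z) := by ext y; simp; tauto
    rw [this] at c1
    exact (mem_closure_iff_mrank hSMZ heMZ).2 (by omega)

lemma contract_flat_iff (hMZ : IsContraction M MZ Z) (hZE : Z ⊆ M.E)
    (hX : X ⊆ M.E \ Z) : MZ.IsFlat X ↔ M.IsFlat (X ∪ Z) := by
  have hXZ : Disjoint X Z := disjoint_sdiff_left.mono_left hX
  rw [flat_iff_closure_eq, flat_iff_closure_eq, contract_closure hMZ hZE hX]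
  constructor
  · intro h
    have hZcl : Z ⊆ M.closure (X ∪ Z) :=
      (M.subset_closure (X ∪ Z) (union_subset (hX.trans diff_subset) hZE)).trans'
        subset_union_right
    rw [← diff_union_of_subset hZcl, h]
  · intro h
    rw [h, union_diff_right, hXZ.sdiff_eq_left]

lemma restrict_closure_flat (hZflat : M.IsFlat Z) (hS : S ⊆ Z) :
    (M ↾ Z).closure S = M.closure S := by
  have hZE := hZflat.subset_ground
  have hSE : S ⊆ M.E := hS.trans hZE
  have hclZ : M.closure S ⊆ Z := hZflat.closure ▸ M.closure_subset_closure hS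
  ext e
  constructor
  · intro he
    have heZ : e ∈ Z := (M ↾ Z).closure_subset_ground S he
    have hr := (mem_closure_iff_mrank (show S ⊆ (M ↾ Z).E from hS) heZ).1 he
    rw [mrank_restrict (insert_subset heZ hS), mrank_restrict hS] at hr
    exact (mem_closure_iff_mrank hSE (hZE heZ)).2 hr
  · intro he
    have heZ : e ∈ Z := hclZ he
    have hr := (mem_closure_iff_mrank hSE (hZE heZ)).1 he
    refine (mem_closure_iff_mrank (show S ⊆ (M ↾ Z).E from hS) heZ).2 ?_
    rw [mrank_restrict (insert_subset heZ hS), mrank_restrict hS]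
    exact hr

lemma restrict_flat_iff (hZflat : M.IsFlat Z) (hX : X ⊆ Z) :
    (M ↾ Z).IsFlat X ↔ M.IsFlat X := by
  rw [flat_iff_closure_eq, flat_iff_closure_eq, restrict_closure_flat hZflat hX]

end Contraction

section DisjointSum

variable [Fintype α] {M1 M2 : Matroid α} {hd : Disjoint M1.E M2.E} {S F : Set α} {e : α}

lemma disjointSum_mrank (hd : Disjoint M1.E M2.E) (S : Set α) :
    mrank (M1.disjointSum M2 hd) S = mrank M1 (S ∩ M1.E) + mrank M2 (S ∩ M2.E) := by
  refine le_antisymm ?_ ?_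
  · obtain ⟨I, hIS, hI, hIcard⟩ := exists_mrank (M1.disjointSum M2 hd) S
    rw [Matroid.disjointSum_indep_iff] at hI
    obtain ⟨h1, h2, h3⟩ := hI
    have hsplit : I = (I ∩ M1.E) ∪ (I ∩ M2.E) := by
      rw [← inter_union_distrib_left, inter_eq_self_of_subset_left h3]
    have hcard : I.ncard = (I ∩ M1.E).ncard + (I ∩ M2.E).ncard := by
      nth_rewrite 1 [hsplit]
      exact Set.ncard_union_eq (hd.mono inter_subset_right inter_subset_right)
        (Set.toFinite _) (Set.toFinite _)
    have c1 := ncard_le_mrank h1 (inter_subset_inter_left _ hIS)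
    have c2 := ncard_le_mrank h2 (inter_subset_inter_left _ hIS)
    omega
  · obtain ⟨I1, hI1S, hI1, hI1card⟩ := exists_mrank M1 (S ∩ M1.E)
    obtain ⟨I2, hI2S, hI2, hI2card⟩ := exists_mrank M2 (S ∩ M2.E)
    have hI1E := hI1.subset_ground
    have hI2E := hI2.subset_ground
    have e1 : (I1 ∪ I2) ∩ M1.E = I1 := by
      rw [union_inter_distrib_right, inter_eq_self_of_subset_left hI1E,
        ((hd.symm.mono_left hI2E).inter_eq), union_empty]
    have e2 : (I1 ∪ I2) ∩ M2.E = I2 := by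
      rw [union_inter_distrib_right, inter_eq_self_of_subset_left hI2E,
        ((hd.mono_left hI1E).inter_eq), empty_union]
    have hind : (M1.disjointSum M2 hd).Indep (I1 ∪ I2) := by
      rw [Matroid.disjointSum_indep_iff, e1, e2]
      exact ⟨hI1, hI2, union_subset_union hI1E hI2E⟩
    have hsub : I1 ∪ I2 ⊆ S :=
      union_subset (hI1S.trans inter_subset_left) (hI2S.trans inter_subset_left)
    have hcard : (I1 ∪ I2).ncard = I1.ncard + I2.ncard :=
      Set.ncard_union_eq (hd.mono hI1E hI2E) (Set.toFinite _) (Set.toFinite _)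
    have := ncard_le_mrank hind hsub
    omega

lemma disjointSum_mloopless (hd : Disjoint M1.E M2.E) (h1 : MLoopless M1)
    (h2 : MLoopless M2) : MLoopless (M1.disjointSum M2 hd) := by
  intro e he
  rw [Matroid.disjointSum_ground_eq] at he
  rw [Matroid.disjointSum_indep_iff]
  rcases he with he | he
  · have heE2 : e ∉ M2.E := fun h => hd.ne_of_mem he h rfl
    constructor
    · rw [inter_eq_self_of_subset_left (singleton_subset_iff.2 he)]
      exact h1 e he
    constructor
    · rw [(disjoint_singleton_left.2 heE2).inter_eq]
      exact M2.empty_indep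
    · simp [he]
  · have heE1 : e ∉ M1.E := fun h => hd.ne_of_mem h he rfl
    constructor
    · rw [(disjoint_singleton_left.2 heE1).inter_eq]
      exact M1.empty_indep
    constructor
    · rw [inter_eq_self_of_subset_left (singleton_subset_iff.2 he)]
      exact h2 e he
    · simp [he]

lemma disjointSum_closure (hd : Disjoint M1.E M2.E) (hS : S ⊆ M1.E ∪ M2.E) :
    (M1.disjointSum M2 hd).closure S = M1.closure (S ∩ M1.E) ∪ M2.closure (S ∩ M2.E) := by
  set M' := M1.disjointSum M2 hd with hM'
  have hSE : S ⊆ M'.E := by rw [hM', Matroid.disjointSum_ground_eq]; exact hS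
  ext e
  by_cases heE : e ∈ M1.E ∪ M2.E
  swap
  · constructor
    · intro h
      exact absurd (Matroid.disjointSum_ground_eq ▸ M'.closure_subset_ground S h) heE
    · rintro (h | h)
      · exact absurd (Or.inl (M1.closure_subset_ground _ h)) heE
      · exact absurd (Or.inr (M2.closure_subset_ground _ h)) heE
  have heM' : e ∈ M'.E := by rw [hM', Matroid.disjointSum_ground_eq]; exact heE
  rw [mem_closure_iff_mrank hSE heM']
  rw [show mrank M' (insert e S) = _ from disjointSum_mrank hd (insert e S),
    show mrank M' S = _ from disjointSum_mrank hd S]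
  rcases heE with he | he
  · have heE2 : e ∉ M2.E := fun h => hd.ne_of_mem he h rfl
    have e1 : insert e S ∩ M1.E = insert e (S ∩ M1.E) := by
      ext y; simp only [mem_insert_iff, mem_inter_iff]; constructor
      · rintro ⟨rfl | hy, hyE⟩
        · exact Or.inl rfl
        · exact Or.inr ⟨hy, hyE⟩
      · rintro (rfl | ⟨hy, hyE⟩)
        · exact ⟨Or.inl rfl, he⟩
        · exact ⟨Or.inr hy, hyE⟩
    have e2 : insert e S ∩ M2.E = S ∩ M2.E := by
      ext y; simp only [mem_insert_iff, mem_inter_iff]; constructor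
      · rintro ⟨rfl | hy, hyE⟩
        · exact absurd hyE heE2
        · exact ⟨hy, hyE⟩
      · rintro ⟨hy, hyE⟩; exact ⟨Or.inr hy, hyE⟩
    rw [e1, e2]
    have hmono := mrank_mono M1 (subset_insert e (S ∩ M1.E))
    have hne2 : e ∉ M2.closure (S ∩ M2.E) := fun h => heE2 (M2.closure_subset_ground _ h)
    constructor
    · intro h
      exact Or.inl ((mem_closure_iff_mrank inter_subset_right he).2 (by omega))
    · rintro (h | h)
      · have := (mem_closure_iff_mrank inter_subset_right he).1 h
        omega
      · exact absurd h hne2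
  · have heE1 : e ∉ M1.E := fun h => hd.ne_of_mem h he rfl
    have e1 : insert e S ∩ M2.E = insert e (S ∩ M2.E) := by
      ext y; simp only [mem_insert_iff, mem_inter_iff]; constructor
      · rintro ⟨rfl | hy, hyE⟩
        · exact Or.inl rfl
        · exact Or.inr ⟨hy, hyE⟩
      · rintro (rfl | ⟨hy, hyE⟩)
        · exact ⟨Or.inl rfl, he⟩
        · exact ⟨Or.inr hy, hyE⟩
    have e2 : insert e S ∩ M1.E = S ∩ M1.E := by
      ext y; simp only [mem_insert_iff, mem_inter_iff]; constructor
      · rintro ⟨rfl | hy, hyE⟩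
        · exact absurd hyE heE1
        · exact ⟨hy, hyE⟩
      · rintro ⟨hy, hyE⟩; exact ⟨Or.inr hy, hyE⟩
    rw [e1, e2]
    have hmono := mrank_mono M2 (subset_insert e (S ∩ M2.E))
    have hne1 : e ∉ M1.closure (S ∩ M1.E) := fun h => heE1 (M1.closure_subset_ground _ h)
    constructor
    · intro h
      exact Or.inr ((mem_closure_iff_mrank inter_subset_right he).2 (by omega))
    · rintro (h | h)
      · exact absurd h hne1
      · have := (mem_closure_iff_mrank inter_subset_right he).1 h
        omega

lemma disjointSum_flat_iff (hd : Disjoint M1.E M2.E) (F : Set α) :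
    (M1.disjointSum M2 hd).IsFlat F ↔
      M1.IsFlat (F ∩ M1.E) ∧ M2.IsFlat (F ∩ M2.E) ∧ F ⊆ M1.E ∪ M2.E := by
  constructor
  · intro hF
    have hFE : F ⊆ M1.E ∪ M2.E := Matroid.disjointSum_ground_eq ▸ hF.subset_ground
    have hcl := hF.closure
    rw [disjointSum_closure hd hFE] at hcl
    have hc1 : M1.closure (F ∩ M1.E) = F ∩ M1.E := by
      refine le_antisymm ?_ (M1.subset_closure _ inter_subset_right)
      intro y hy
      have hyE : y ∈ M1.E := M1.closure_subset_ground _ hy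
      exact ⟨hcl ▸ Or.inl hy, hyE⟩
    have hc2 : M2.closure (F ∩ M2.E) = F ∩ M2.E := by
      refine le_antisymm ?_ (M2.subset_closure _ inter_subset_right)
      intro y hy
      have hyE : y ∈ M2.E := M2.closure_subset_ground _ hy
      exact ⟨hcl ▸ Or.inr hy, hyE⟩
    exact ⟨flat_iff_closure_eq.2 hc1, flat_iff_closure_eq.2 hc2, hFE⟩
  · rintro ⟨h1, h2, hFE⟩
    rw [flat_iff_closure_eq, disjointSum_closure hd hFE, h1.closure, h2.closure,
      ← inter_union_distrib_left, inter_eq_self_of_subset_left hFE]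

lemma disjointSum_mrank_left (hd : Disjoint M1.E M2.E) (hS : S ⊆ M1.E) :
    mrank (M1.disjointSum M2 hd) S = mrank M1 S := by
  rw [disjointSum_mrank hd S, inter_eq_self_of_subset_left hS,
    ((hd.mono_left hS).inter_eq), mrank_empty, add_zero]

lemma disjointSum_mrank_right (hd : Disjoint M1.E M2.E) (hS : S ⊆ M2.E) :
    mrank (M1.disjointSum M2 hd) S = mrank M2 S := by
  rw [disjointSum_mrank hd S, inter_eq_self_of_subset_left hS,
    ((hd.symm.mono_left hS).inter_eq), mrank_empty, zero_add]

end DisjointSum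

section Star

variable [Fintype α] {M : Matroid α} {B : Set (Set α)} {Z Y : Set α} {x : α}

lemma star_lemma (hM : MLoopless M) (hB : IsBuildingSet M B) (hZB : Z ∈ B)
    (hY : Y ∈ B) (hx : x ∈ M.closure (Y ∪ Z)) (hxZ : x ∉ Z) :
    ∃ Y', Y' ∈ B ∧ x ∈ Y' ∧ M.closure (Y' ∪ Z) = M.closure (Y ∪ Z) := by
  have hZflat := (hB.1 Z hZB).1
  have hYflat := (hB.1 Y hY).1
  have hZE := hZflat.subset_ground
  have hYE := hYflat.subset_ground
  have hYZE : Y ∪ Z ⊆ M.E := union_subset hYE hZE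
  set G1 := M.closure (Y ∪ Z) with hG1
  have hG1flat : M.IsFlat G1 := flat_closure M _
  have hG1E : G1 ⊆ M.E := M.closure_subset_ground _
  have hYG1 : Y ⊆ G1 := subset_union_left.trans (M.subset_closure _ hYZE)
  have hZG1 : Z ⊆ G1 := subset_union_right.trans (M.subset_closure _ hYZE)
  -- maximal element of B between Y and G1
  obtain ⟨T, hTmem, hTmax⟩ := Set.Finite.exists_maximalFor id
    {X | X ∈ B ∧ Y ⊆ X ∧ X ⊆ G1} (Set.toFinite _) ⟨Y, hY, Subset.rfl, hYG1⟩
  obtain ⟨hTB, hYT, hTG1⟩ := hTmem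
  have hclTZ : M.closure (T ∪ Z) = G1 := by
    refine le_antisymm ?_ (M.closure_subset_closure (union_subset_union_left Z hYT))
    have : T ∪ Z ⊆ G1 := union_subset hTG1 hZG1
    exact (M.closure_subset_closure this).trans (le_of_eq hG1flat.closure)
  by_cases hxT : x ∈ T
  · exact ⟨T, hTB, hxT, hclTZ⟩
  by_cases hTZ : (T ∩ Z).Nonempty
  · refine ⟨M.closure (T ∪ Z), hB.2.2 T hTB Z hZB hTZ, hclTZ ▸ hx, ?_⟩
    rw [closure_union_closure_left_eq, union_assoc, union_self]
    exact hclTZ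
  -- remaining case: contradiction
  exfalso
  have hcomp : ∀ a ∈ T, compM M G1 a ⊆ T := by
    intro a haT
    have haG1 : a ∈ G1 := hTG1 haT
    set C := compM M G1 a with hC
    have hCflat : M.IsFlat C := compM_flat hM hG1flat haG1
    have hCne : C.Nonempty := ⟨a, mem_compM_self haG1⟩
    have hCB : C ∈ B := hB.2.1 C hCflat hCne (compM_connected hG1E haG1)
    have hjoin : M.closure (C ∪ T) ∈ B :=
      hB.2.2 C hCB T hTB ⟨a, mem_compM_self haG1, haT⟩
    have hCT : C ∪ T ⊆ G1 := union_subset (compM_subset_base M G1 a) hTG1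
    have hCTE : C ∪ T ⊆ M.E := hCT.trans hG1E
    have hTsub : T ⊆ M.closure (C ∪ T) :=
      subset_union_right.trans (M.subset_closure _ hCTE)
    have hsubG1 : M.closure (C ∪ T) ⊆ G1 := by
      rw [← hG1flat.closure]; exact M.closure_subset_closure hCT
    have heq : T = M.closure (C ∪ T) :=
      le_antisymm hTsub (hTmax ⟨hjoin, hYT.trans hTsub, hsubG1⟩ hTsub)
    rw [heq]
    exact subset_union_left.trans (M.subset_closure _ hCTE)
  have hsep : SepM M G1 T := sepM_of_comp_closed hG1E hTG1 hcomp
  have hxG1 : x ∈ G1 := hx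
  have hxcl : x ∈ M.closure ((Y ∪ Z) \ T) :=
    hsep.closure_mem hG1E (union_subset hYG1 hZG1) hx ⟨hxG1, hxT⟩
  have hsubZ : (Y ∪ Z) \ T ⊆ Z := by
    rintro y ⟨hy1 | hy1, hy2⟩
    · exact absurd (hYT hy1) hy2
    · exact hy1
  have : x ∈ Z := by
    have := M.closure_subset_closure hsubZ hxcl
    rwa [hZflat.closure] at this
  exact hxZ this

end Star


end AuxLemmas

/-- `B|_Z ∪ B^Z` is a building set for the direct sum of the
restriction `M|Z` and the contraction `M/Z`. -/
theorem restriction_contraction_building {α : Type*} [Fintype α] [LinearOrder α]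
    (M MZ : Matroid α) (hM : MLoopless M)
    (B : Set (Set α)) (hB : IsBuildingSet M B)
    (Z : Set α) (hZ : Z ∈ B \ maxB B)
    (hMZ : IsContraction M MZ Z)
    (hdisj : Disjoint (M.restrict Z).E MZ.E) :
    IsBuildingSet (Matroid.disjointSum (M.restrict Z) MZ hdisj)
      ({Y | Y ∈ B ∧ Y ⊆ Z} ∪ {W | ∃ Y ∈ B, ¬ Y ⊆ Z ∧ W = M.closure (Y ∪ Z) \ Z}) := by
  classical
  obtain ⟨hZB, hZmax⟩ := hZ
  have hZflat : M.IsFlat Z := (hB.1 Z hZB).1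
  have hZne : Z.Nonempty := (hB.1 Z hZB).2
  have hZE : Z ⊆ M.E := hZflat.subset_ground
  have hMZE : MZ.E = M.E \ Z := hMZ.1
  have hM1E : (M.restrict Z).E = Z := rfl
  have hdisjZ : Disjoint Z MZ.E := hdisj
  have hclM0 : M.closure ∅ = ∅ := mloopless_closure_empty hM
  have hcl10 : (M ↾ Z).closure ∅ = ∅ := by
    rw [restrict_closure_flat hZflat (empty_subset _), hclM0]
  have hclMZ0 : MZ.closure ∅ = ∅ := by
    rw [contract_closure hMZ hZE (empty_subset _), empty_union, hZflat.closure, diff_self]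
  have hflat10 : (M ↾ Z).IsFlat ∅ := flat_iff_closure_eq.2 hcl10
  have hflatMZ0 : MZ.IsFlat ∅ := flat_iff_closure_eq.2 hclMZ0
  -- facts about the second-type sets
  have hWfacts : ∀ Y, Y ∈ B → ¬ Y ⊆ Z →
      (M.closure (Y ∪ Z) \ Z) ∪ Z = M.closure (Y ∪ Z) ∧
      M.closure (Y ∪ Z) \ Z ⊆ M.E \ Z ∧ (M.closure (Y ∪ Z) \ Z).Nonempty := by
    intro Y hYB hYZ
    have hYE : Y ⊆ M.E := (hB.1 Y hYB).1.subset_ground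
    have hYZE : Y ∪ Z ⊆ M.E := union_subset hYE hZE
    have hZsub : Z ⊆ M.closure (Y ∪ Z) :=
      subset_union_right.trans (M.subset_closure _ hYZE)
    refine ⟨diff_union_of_subset hZsub, fun y hy => ⟨M.closure_subset_ground _ hy.1, hy.2⟩, ?_⟩
    obtain ⟨y, hyY, hyZ⟩ := not_subset.1 hYZ
    exact ⟨y, subset_union_left.trans (M.subset_closure _ hYZE) hyY, hyZ⟩
  refine ⟨?_, ?_, ?_⟩
  · -- PART 1 : members are nonempty flats
    rintro X (⟨hXB, hXZ⟩ | ⟨Y, hYB, hYZ, rfl⟩)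
    · refine ⟨?_, (hB.1 X hXB).2⟩
      rw [disjointSum_flat_iff]
      refine ⟨?_, ?_, ?_⟩
      · rw [show X ∩ (M ↾ Z).E = X from inter_eq_self_of_subset_left hXZ]
        exact (restrict_flat_iff hZflat hXZ).2 (hB.1 X hXB).1
      · rw [show X ∩ MZ.E = ∅ from (hdisjZ.mono_left hXZ).inter_eq]
        exact hflatMZ0
      · exact fun y hy => Or.inl (hXZ hy)
    · obtain ⟨hWZ, hWsub, hWne⟩ := hWfacts Y hYB hYZ
      set W := M.closure (Y ∪ Z) \ Z with hWdef
      have hWMZ : W ⊆ MZ.E := by rw [hMZE]; exact hWsub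
      refine ⟨?_, hWne⟩
      rw [disjointSum_flat_iff]
      refine ⟨?_, ?_, ?_⟩
      · rw [show W ∩ (M ↾ Z).E = ∅ from (hdisjZ.symm.mono_left hWMZ).inter_eq]
        exact hflat10
      · rw [inter_eq_self_of_subset_left hWMZ]
        rw [contract_flat_iff hMZ hZE hWsub, hWZ]
        exact flat_closure M _
      · exact fun y hy => Or.inr (hWMZ hy)
  · -- PART 2 : connected flats belong
    intro X hXflat hXne hXconn
    rw [disjointSum_flat_iff] at hXflat
    obtain ⟨hXf1, hXf2, hXE⟩ := hXflat
    simp only [restrict_ground_eq] at hXf1 hXE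
    by_cases h1 : (X ∩ Z).Nonempty
    · by_cases h2 : (X ∩ MZ.E).Nonempty
      · -- both sides nonempty : contradicts connectivity
        exfalso
        refine hXconn (X ∩ Z) (X ∩ MZ.E) ?_
          (hdisjZ.mono inter_subset_right inter_subset_right) h1 h2 ?_
        · simp only [restrict_ground_eq]
          rw [← inter_union_distrib_left]
          exact inter_eq_self_of_subset_left hXE
        · simp only [restrict_ground_eq]
          rw [mrank_restrict inter_subset_left, mrank_restrict inter_subset_left,
            mrank_restrict Subset.rfl,
            disjointSum_mrank_left hdisj (inter_subset_right : X ∩ Z ⊆ (M ↾ Z).E),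
            disjointSum_mrank_right hdisj inter_subset_right,
            disjointSum_mrank hdisj X]
          rfl
      · -- X ⊆ Z
        have hXZ : X ⊆ Z := by
          intro t ht
          rcases hXE ht with h | h
          · exact h
          · exact absurd ⟨ht, h⟩ (fun hh => h2 ⟨t, hh⟩)
        have hXflatM : M.IsFlat X := by
          rw [← inter_eq_self_of_subset_left hXZ]
          exact (restrict_flat_iff hZflat inter_subset_right).1
            (by rwa [inter_eq_self_of_subset_left hXZ] at hXf1 ⊢)
        refine Or.inl ⟨hB.2.1 X hXflatM hXne ?_, hXZ⟩
        intro P Q hPQ hdis hPne hQne heq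
        simp only [restrict_ground_eq] at hPQ heq
        have hPX : P ⊆ X := hPQ ▸ subset_union_left
        have hQX : Q ⊆ X := hPQ ▸ subset_union_right
        have key : ∀ S, S ⊆ X →
            mrank ((Matroid.disjointSum (M.restrict Z) MZ hdisj).restrict X) S
              = mrank (M.restrict X) S := by
          intro S hS
          rw [mrank_restrict hS, mrank_restrict hS,
            disjointSum_mrank_left hdisj ((hS.trans hXZ : S ⊆ Z) : S ⊆ (M ↾ Z).E),
            mrank_restrict (hS.trans hXZ)]
        refine hXconn P Q (by simp only [restrict_ground_eq]; exact hPQ) hdis hPne hQne ?_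
        simp only [restrict_ground_eq]
        rw [key P hPX, key Q hQX, key X Subset.rfl]
        exact heq
    · -- X ⊆ MZ.E : the contraction side
      have hXMZ : X ⊆ MZ.E := by
        intro t ht
        rcases hXE ht with h | h
        · exact absurd ⟨ht, h⟩ (fun hh => h1 ⟨t, hh⟩)
        · exact h
      have hXsub : X ⊆ M.E \ Z := by rw [← hMZE]; exact hXMZ
      have hXflatMZ : MZ.IsFlat X := by
        rwa [inter_eq_self_of_subset_left hXMZ] at hXf2
      have hFflat : M.IsFlat (X ∪ Z) := (contract_flat_iff hMZ hZE hXsub).1 hXflatMZ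
      set F := X ∪ Z with hFdef
      have hFE : F ⊆ M.E := hFflat.subset_ground
      obtain ⟨x0, hx0X⟩ := hXne
      have hx0F : x0 ∈ F := Or.inl hx0X
      have hx0Z : x0 ∉ Z := (hXsub hx0X).2
      set D := compM M F x0 with hDdef
      have hDF : D ⊆ F := compM_subset_base M F x0
      have hx0D : x0 ∈ D := mem_compM_self hx0F
      have hDB : D ∈ B :=
        hB.2.1 D (compM_flat hM hFflat hx0F) ⟨x0, hx0D⟩ (compM_connected hFE hx0F)
      have hDZ : ¬ D ⊆ Z := fun h => hx0Z (h hx0D)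
      have hXZdisj : Disjoint X Z := disjoint_sdiff_left.mono_left hXsub
      have hFDZ : F ⊆ D ∪ Z := by
        by_contra hcon
        obtain ⟨y, hyF, hyDZ⟩ := not_subset.1 hcon
        have hyX : y ∈ X := hyF.resolve_right (fun h => hyDZ (Or.inr h))
        have hyD : y ∉ D := fun h => hyDZ (Or.inl h)
        set A := D \ Z with hAdef
        have hAX : A ⊆ X := by
          intro a ha
          rcases hDF ha.1 with h | h
          · exact h
          · exact absurd h ha.2
        have hx0A : x0 ∈ A := ⟨hx0D, hx0Z⟩
        have hyB2 : y ∈ X \ A := ⟨hyX, fun h => hyD h.1⟩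
        have hsep : SepM M F D := sepM_compM hFE x0
        have r3 : mrank M D + mrank M (F \ D) = mrank M F := hsep.2
        have r4 : mrank M Z = mrank M (Z ∩ D) + mrank M (Z \ D) :=
          hsep.subset_rank hFE subset_union_right
        have e1 : A ∪ Z = D ∪ Z := Set.diff_union_self
        have r1 : mrank M (A ∪ Z) = mrank M D + mrank M (Z \ D) := by
          rw [e1]
          have h := hsep.subset_rank hFE
            (show D ∪ Z ⊆ F from union_subset hDF subset_union_right)
          rwa [inter_eq_self_of_subset_right subset_union_left, union_diff_left] at h
        have e2 : (X \ A) ∪ Z = (Z ∩ D) ∪ (F \ D) := by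
          ext t
          have htZ : t ∈ X → t ∉ Z := fun ht => (hXsub ht).2
          simp only [hFdef, hAdef, mem_union, mem_diff, mem_inter_iff, not_and, not_not]
          constructor
          · rintro (⟨htX, htA⟩ | htZ')
            · by_cases htD : t ∈ D
              · exact absurd (htA htD) (htZ htX)
              · exact Or.inr ⟨Or.inl htX, htD⟩
            · by_cases htD : t ∈ D
              · exact Or.inl ⟨htZ', htD⟩
              · exact Or.inr ⟨Or.inr htZ', htD⟩
          · rintro (⟨ht1, ht2⟩ | ⟨ht1, ht2⟩)
            · exact Or.inr ht1
            · rcases ht1 with h | h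
              · exact Or.inl ⟨h, fun hh => absurd hh ht2⟩
              · exact Or.inr h
        have s1 : ((X \ A) ∪ Z) ∩ D = Z ∩ D := by
          rw [e2, union_inter_distrib_right, inter_assoc, inter_self,
            disjoint_sdiff_left.inter_eq, union_empty]
        have s2 : ((X \ A) ∪ Z) \ D = F \ D := by
          rw [e2]
          ext t
          simp only [mem_union, mem_diff, mem_inter_iff]
          tauto
        have r2 : mrank M ((X \ A) ∪ Z) = mrank M (Z ∩ D) + mrank M (F \ D) := by
          have h := hsep.subset_rank hFE
            (show (X \ A) ∪ Z ⊆ F from union_subset (diff_subset.trans subset_union_left)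
              subset_union_right)
          rwa [s1, s2] at h
        have hAE : A ⊆ M.E \ Z := fun a ha => ⟨hFE (hDF ha.1), ha.2⟩
        have c1 : mrank MZ A + mrank M Z = mrank M (A ∪ Z) := contract_mrank hMZ hZE hAE
        have c2 : mrank MZ (X \ A) + mrank M Z = mrank M ((X \ A) ∪ Z) :=
          contract_mrank hMZ hZE (diff_subset.trans hXsub)
        have c3 : mrank MZ X + mrank M Z = mrank M F := contract_mrank hMZ hZE hXsub
        have hkey : mrank MZ A + mrank MZ (X \ A) = mrank MZ X := by omega
        refine hXconn A (X \ A) ?_ disjoint_sdiff_right ⟨x0, hx0A⟩ ⟨y, hyB2⟩ ?_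
        · simp only [restrict_ground_eq]
          exact union_diff_cancel hAX
        · simp only [restrict_ground_eq]
          rw [mrank_restrict hAX, mrank_restrict diff_subset, mrank_restrict Subset.rfl,
            disjointSum_mrank_right hdisj (hAX.trans hXMZ),
            disjointSum_mrank_right hdisj (diff_subset.trans hXMZ),
            disjointSum_mrank_right hdisj hXMZ]
          exact hkey
      have hFeq : M.closure (D ∪ Z) = F := by
        refine le_antisymm ?_ (hFDZ.trans (M.subset_closure _ (union_subset (hDF.trans hFE) hZE)))
        rw [← hFflat.closure]
        exact M.closure_subset_closure (union_subset hDF subset_union_right)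
      refine Or.inr ⟨D, hDB, hDZ, ?_⟩
      rw [hFeq, hFdef, union_diff_right, hXZdisj.sdiff_eq_left]
  · -- PART 3 : join closure
    rintro X1 (⟨hX1B, hX1Z⟩ | ⟨Y1, hY1B, hY1Z, rfl⟩) X2 hX2 hne
    · rcases hX2 with ⟨hX2B, hX2Z⟩ | ⟨Y2, hY2B, hY2Z, rfl⟩
      · -- both restriction side
        have hsub : X1 ∪ X2 ⊆ Z := union_subset hX1Z hX2Z
        have hcl : (Matroid.disjointSum (M.restrict Z) MZ hdisj).closure (X1 ∪ X2)
            = M.closure (X1 ∪ X2) := by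
          rw [disjointSum_closure hdisj (fun t ht => Or.inl (hsub ht)),
            (show (X1 ∪ X2) ∩ (M ↾ Z).E = X1 ∪ X2 from inter_eq_self_of_subset_left hsub),
            (show (X1 ∪ X2) ∩ MZ.E = ∅ from (hdisjZ.mono_left hsub).inter_eq),
            hclMZ0, union_empty, restrict_closure_flat hZflat hsub]
        rw [hcl]
        refine Or.inl ⟨hB.2.2 X1 hX1B X2 hX2B hne, ?_⟩
        rw [← hZflat.closure]
        exact M.closure_subset_closure hsub
      · exfalso
        obtain ⟨t, ht1, ht2⟩ := hne
        exact ht2.2 (hX1Z ht1)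
    · rcases hX2 with ⟨hX2B, hX2Z⟩ | ⟨Y2, hY2B, hY2Z, rfl⟩
      · exfalso
        obtain ⟨t, ht1, ht2⟩ := hne
        exact ht1.2 (hX2Z ht2)
      · -- both contraction side
        obtain ⟨hW1Z, hW1sub, hW1ne⟩ := hWfacts Y1 hY1B hY1Z
        obtain ⟨hW2Z, hW2sub, hW2ne⟩ := hWfacts Y2 hY2B hY2Z
        set W1 := M.closure (Y1 ∪ Z) \ Z with hW1def
        set W2 := M.closure (Y2 ∪ Z) \ Z with hW2def
        obtain ⟨x, hxW1, hxW2⟩ := hne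
        have hxZ : x ∉ Z := hxW1.2
        obtain ⟨Y1', hY1'B, hxY1', hcl1⟩ := star_lemma hM hB hZB hY1B hxW1.1 hxZ
        obtain ⟨Y2', hY2'B, hxY2', hcl2⟩ := star_lemma hM hB hZB hY2B hxW2.1 hxZ
        have hjB : M.closure (Y1' ∪ Y2') ∈ B := hB.2.2 _ hY1'B _ hY2'B ⟨x, hxY1', hxY2'⟩
        have hY1'E := (hB.1 _ hY1'B).1.subset_ground
        have hY2'E := (hB.1 _ hY2'B).1.subset_ground
        have hxY : x ∈ M.closure (Y1' ∪ Y2') :=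
          M.subset_closure _ (union_subset hY1'E hY2'E) (Or.inl hxY1')
        have hYnotZ : ¬ M.closure (Y1' ∪ Y2') ⊆ Z := fun h => hxZ (h hxY)
        have hWsubE : W1 ∪ W2 ⊆ M.E \ Z := union_subset hW1sub hW2sub
        have hWsubMZ : W1 ∪ W2 ⊆ MZ.E := by rw [hMZE]; exact hWsubE
        have hcl' : (Matroid.disjointSum (M.restrict Z) MZ hdisj).closure (W1 ∪ W2)
            = M.closure ((W1 ∪ W2) ∪ Z) \ Z := by
          rw [disjointSum_closure hdisj (fun t ht => Or.inr (hWsubMZ ht)),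
            (show (W1 ∪ W2) ∩ (M ↾ Z).E = ∅ from (hdisjZ.symm.mono_left hWsubMZ).inter_eq),
            hcl10, inter_eq_self_of_subset_left hWsubMZ,
            contract_closure hMZ hZE hWsubE, empty_union]
        have hfin : M.closure ((W1 ∪ W2) ∪ Z)
            = M.closure (M.closure (Y1' ∪ Y2') ∪ Z) := by
          calc M.closure ((W1 ∪ W2) ∪ Z) = M.closure ((W1 ∪ Z) ∪ (W2 ∪ Z)) := by
                rw [union_union_distrib_right]
            _ = M.closure (M.closure (Y1 ∪ Z) ∪ M.closure (Y2 ∪ Z)) := by rw [hW1Z, hW2Z]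
            _ = M.closure ((Y1 ∪ Z) ∪ (Y2 ∪ Z)) :=
                closure_closure_union_closure_eq_closure_union M _ _
            _ = M.closure (M.closure (Y1' ∪ Z) ∪ M.closure (Y2' ∪ Z)) := by
                rw [hcl1, hcl2, closure_closure_union_closure_eq_closure_union]
            _ = M.closure ((Y1' ∪ Z) ∪ (Y2' ∪ Z)) :=
                closure_closure_union_closure_eq_closure_union M _ _
            _ = M.closure ((Y1' ∪ Y2') ∪ Z) := by rw [← union_union_distrib_right]
            _ = M.closure (M.closure (Y1' ∪ Y2') ∪ Z) :=
                (closure_union_closure_left_eq M _ _).symm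
        refine Or.inr ⟨M.closure (Y1' ∪ Y2'), hjB, hYnotZ, ?_⟩
        rw [hcl', hfin]
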